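/- Let n ≥ 1, let w ∈ W have underlying permutation σ₀ and negated-index set B. For 1 ≤ i ≤ j ≤ n, the root e_i + e_j lies in Φ_w if and only if one of the following holds: (1) i ∈ B and j ∈ B; (2) i ∈ B, j ∉ B and σ₀⁻¹(j) > σ₀⁻¹(i); (3) j ∈ B, i ∉ B and σ₀⁻¹(i) > σ₀⁻¹(j). In particular, for i = j: 2e_i ∈ Φ_w if and only if i ∈ B, and e_i + e_j ∉ Φ_w whenever i ∉ B and j ∉ B. -/
import Mathlib


open Pointwise

/-- The `i`-th standard basis vector of `ℤⁿ`. -/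
def stdBasis (n : ℕ) (i : Fin n) : Fin n → ℤ := Pi.single i 1

/-- The positive roots of type `Cₙ`: `eᵢ - eⱼ` for `i < j` and `eᵢ + eⱼ` for `i ≤ j`. -/
def PhiPos (n : ℕ) : Set (Fin n → ℤ) :=
  {v | ∃ i j : Fin n, i < j ∧ v = stdBasis n i - stdBasis n j} ∪
  {v | ∃ i j : Fin n, i ≤ j ∧ v = stdBasis n i + stdBasis n j}

/-- Membership in the hyperoctahedral group `W`: a linear automorphism of `ℤⁿ` sending each
standard basis vector to `±` a standard basis vector. -/
def IsSigned {n : ℕ} (w : (Fin n → ℤ) ≃ₗ[ℤ] (Fin n → ℤ)) : Prop :=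
  ∀ j : Fin n, ∃ i : Fin n,
    w (stdBasis n j) = stdBasis n i ∨ w (stdBasis n j) = - stdBasis n i

/-- `Φ_w = w(−Φ⁺) ∩ Φ⁺`. -/
def PhiW {n : ℕ} (w : (Fin n → ℤ) ≃ₗ[ℤ] (Fin n → ℤ)) : Set (Fin n → ℤ) :=
  (⇑w '' (-(PhiPos n))) ∩ PhiPos n

/-- The permutation `σ` acting linearly on `ℤⁿ` by `eⱼ ↦ e_{σ(j)}`. -/
def permL {n : ℕ} (σ : Equiv.Perm (Fin n)) : (Fin n → ℤ) ≃ₗ[ℤ] (Fin n → ℤ) where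
  toFun v := fun i => v (σ.symm i)
  invFun v := fun i => v (σ i)
  map_add' _ _ := rfl
  map_smul' _ _ := rfl
  left_inv v := by funext i; simp
  right_inv v := by funext i; simp



lemma stdBasis_apply (n : ℕ) (i k : Fin n) : stdBasis n i k = if k = i then 1 else 0 :=
  Pi.single_apply i 1 k

lemma sum_stdBasis (n : ℕ) (i : Fin n) : ∑ k, stdBasis n i k = 1 := by
  simp [stdBasis]

lemma sum_mem_PhiPos {n : ℕ} {v : Fin n → ℤ} (h : v ∈ PhiPos n) :
    (∑ k, v k) = 0 ∨ (∑ k, v k) = 2 := by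
  rcases h with ⟨i, j, hij, rfl⟩ | ⟨i, j, hij, rfl⟩
  · left
    simp [Finset.sum_sub_distrib, sum_stdBasis]
  · right
    simp [Finset.sum_add_distrib, sum_stdBasis]

lemma add_mem_PhiPos {n : ℕ} (a b : Fin n) : stdBasis n a + stdBasis n b ∈ PhiPos n := by
  rcases le_total a b with h | h
  · exact Or.inr ⟨a, b, h, rfl⟩
  · exact Or.inr ⟨b, a, h, add_comm _ _⟩

lemma sub_mem_PhiPos_iff {n : ℕ} (a b : Fin n) :
    stdBasis n a - stdBasis n b ∈ PhiPos n ↔ a < b := by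
  constructor
  · intro h
    rcases h with ⟨i, j, hij, hv⟩ | ⟨i, j, hij, hv⟩
    · have hi := congrFun hv i
      have hj := congrFun hv j
      simp only [Pi.sub_apply, stdBasis_apply, eq_self_iff_true, if_true,
        if_neg hij.ne, if_neg hij.ne'] at hi hj
      have hia : i = a := by
        rcases eq_or_ne i a with h' | h'
        · exact h'
        · exfalso; rw [if_neg h'] at hi; split_ifs at hi <;> omega
      have hjb : j = b := by
        rcases eq_or_ne j b with h' | h'
        · exact h'
        · exfalso; rw [if_neg h'] at hj; split_ifs at hj <;> omega
      rw [hia, hjb] at hij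
      exact hij
    · have hs : (∑ k, (stdBasis n a - stdBasis n b) k) = 0 := by
        simp [Finset.sum_sub_distrib, sum_stdBasis]
      rw [hv] at hs
      simp [Finset.sum_add_distrib, sum_stdBasis] at hs
  · intro h
    exact Or.inl ⟨a, b, h, rfl⟩

lemma neg_add_not_mem_PhiPos {n : ℕ} (a b : Fin n) :
    -stdBasis n a - stdBasis n b ∉ PhiPos n := by
  intro h
  have hs : (∑ k, (-stdBasis n a - stdBasis n b) k) = -2 := by
    simp [Finset.sum_sub_distrib, Finset.sum_neg_distrib, sum_stdBasis]
  rcases sum_mem_PhiPos h with h0 | h2 <;> omega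

theorem stmt7 (n : ℕ) (hn : 1 ≤ n) (w : (Fin n → ℤ) ≃ₗ[ℤ] (Fin n → ℤ))
    (σ₀ : Equiv.Perm (Fin n)) (B : Finset (Fin n))
    (hw : ∀ j : Fin n, w (stdBasis n j) =
      if σ₀ j ∈ B then - stdBasis n (σ₀ j) else stdBasis n (σ₀ j)) :
    (∀ i j : Fin n, i ≤ j →
      (stdBasis n i + stdBasis n j ∈ PhiW w ↔
        (i ∈ B ∧ j ∈ B) ∨
        (i ∈ B ∧ j ∉ B ∧ σ₀.symm i < σ₀.symm j) ∨
        (j ∈ B ∧ i ∉ B ∧ σ₀.symm j < σ₀.symm i))) ∧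
    (∀ i : Fin n, stdBasis n i + stdBasis n i ∈ PhiW w ↔ i ∈ B) ∧
    (∀ i j : Fin n, i ≤ j → i ∉ B → j ∉ B → stdBasis n i + stdBasis n j ∉ PhiW w) := by
  
  have hws : ∀ i : Fin n, w.symm (stdBasis n i) =
      if i ∈ B then -stdBasis n (σ₀.symm i) else stdBasis n (σ₀.symm i) := by
    intro i
    have h := hw (σ₀.symm i)
    rw [Equiv.apply_symm_apply] at h
    by_cases hi : i ∈ B
    · rw [if_pos hi] at h
      rw [if_pos hi]
      have h2 := congrArg w.symm h
      rw [LinearEquiv.symm_apply_apply, map_neg] at h2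
      rw [h2, neg_neg]
    · rw [if_neg hi] at h
      rw [if_neg hi]
      have := congrArg w.symm h
      rw [LinearEquiv.symm_apply_apply] at this
      exact this.symm
  have key : ∀ i j : Fin n, i ≤ j →
      (stdBasis n i + stdBasis n j ∈ PhiW w ↔
        -(w.symm (stdBasis n i) + w.symm (stdBasis n j)) ∈ PhiPos n) := by
    intro i j hij
    constructor
    · rintro ⟨⟨x, hx, hxe⟩, -⟩
      have : x = w.symm (stdBasis n i + stdBasis n j) := by
        rw [← hxe, LinearEquiv.symm_apply_apply]
      rw [this, Set.mem_neg] at hx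
      rwa [map_add] at hx
    · intro h
      refine ⟨⟨w.symm (stdBasis n i + stdBasis n j), ?_, w.apply_symm_apply _⟩,
        Or.inr ⟨i, j, hij, rfl⟩⟩
      rw [Set.mem_neg, map_add]
      exact h
  have main : ∀ i j : Fin n, i ≤ j →
      (stdBasis n i + stdBasis n j ∈ PhiW w ↔
        (i ∈ B ∧ j ∈ B) ∨
        (i ∈ B ∧ j ∉ B ∧ σ₀.symm i < σ₀.symm j) ∨
        (j ∈ B ∧ i ∉ B ∧ σ₀.symm j < σ₀.symm i)) := by
    intro i j hij
    rw [key i j hij, hws i, hws j]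
    by_cases hi : i ∈ B <;> by_cases hj : j ∈ B <;>
      simp only [if_pos, if_neg, hi, hj, if_true, if_false]
    · have : -(-stdBasis n (σ₀.symm i) + -stdBasis n (σ₀.symm j)) =
          stdBasis n (σ₀.symm i) + stdBasis n (σ₀.symm j) := by ring
      rw [this]
      simp [add_mem_PhiPos, hi, hj]
    · have : -(-stdBasis n (σ₀.symm i) + stdBasis n (σ₀.symm j)) =
          stdBasis n (σ₀.symm i) - stdBasis n (σ₀.symm j) := by ring
      rw [this, sub_mem_PhiPos_iff]
      simp [hi, hj]
    · have : -(stdBasis n (σ₀.symm i) + -stdBasis n (σ₀.symm j)) =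
          stdBasis n (σ₀.symm j) - stdBasis n (σ₀.symm i) := by ring
      rw [this, sub_mem_PhiPos_iff]
      simp [hi, hj]
    · have : -(stdBasis n (σ₀.symm i) + stdBasis n (σ₀.symm j)) =
          -stdBasis n (σ₀.symm i) - stdBasis n (σ₀.symm j) := by ring
      rw [this]
      simp [neg_add_not_mem_PhiPos, hi, hj]
  refine ⟨main, ?_, ?_⟩
  · intro i
    rw [main i i le_rfl]
    simp
  · intro i j hij hi hj
    rw [main i j hij]
    simp [hi, hj]
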